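/- For the random scan componentwise accept-reject-based Markov kernel P_RS with M components, selection probabilities λ_k ∈ (0,1) summing to 1, and componentwise acceptance probabilities A_{θ^{(−k)}}(θ^k), for any t ∈ ℤ₊ and any θ = (θ¹,…,θ^M) ∈ Θ: ‖P_RS^t(θ,·) − Π‖_TV ≥ ( 1 − Σ_{k=1}^M λ_k A_{θ^{(−k)}}(θ^k) )^t. -/

import Mathlib

open MeasureTheory

/-- The componentwise acceptance probability `A_{θ^{(−k)}}(θ^k) = ∫ a_k(θ,x) q_k(θ,x) dλ_k(x)`,
where the acceptance function and proposal density of the `k`-th component may depend on the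
remaining components `θ^{(−k)}`. -/
noncomputable def compAcceptProb {M : ℕ} {Ωk : Fin M → Type*}
    [∀ k, MeasurableSpace (Ωk k)] (lamk : ∀ k, Measure (Ωk k))
    (a q : (k : Fin M) → (∀ j, Ωk j) → Ωk k → ℝ) (k : Fin M) (θ : ∀ j, Ωk j) : ℝ :=
  ∫ x, a k θ x * q k θ x ∂(lamk k)

/-- The accept-reject-based kernel for the `k`-th component, targeting the full
conditional of the `k`-th coordinate given `θ^{(−k)}`. -/
noncomputable def compKernel {M : ℕ} {Ωk : Fin M → Type*}
    [∀ k, MeasurableSpace (Ωk k)] (lamk : ∀ k, Measure (Ωk k))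
    (a q : (k : Fin M) → (∀ j, Ωk j) → Ωk k → ℝ) (k : Fin M) (θ : ∀ j, Ωk j) :
    Measure (Ωk k) :=
  (lamk k).withDensity (fun x => ENNReal.ofReal (a k θ x * q k θ x)) +
    ENNReal.ofReal (1 - compAcceptProb lamk a q k θ) • Measure.dirac (θ k)

/-- The random scan componentwise ARB kernel
`P_RS(θ, ∏_k B^k) = Σ_k λ_k P_{θ^{(−k)}}(θ^k, B^k) ∏_{j≠k} δ_{θ^j}(B^j)`. -/
noncomputable def rsKernel {M : ℕ} {Ωk : Fin M → Type*}
    [∀ k, MeasurableSpace (Ωk k)] (sel : Fin M → ℝ) (lamk : ∀ k, Measure (Ωk k))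
    (a q : (k : Fin M) → (∀ j, Ωk j) → Ωk k → ℝ) (θ : ∀ j, Ωk j) :
    Measure (∀ j, Ωk j) :=
  ∑ k, ENNReal.ofReal (sel k) •
    (compKernel lamk a q k θ).map (fun x => Function.update θ k x)

/-- The `t`-step iterate `P^t(θ,·)` of a Markov kernel, with `P^0(θ,·) = δ_θ`. -/
noncomputable def iterK {Ω : Type*} [MeasurableSpace Ω] (P : Ω → Measure Ω) :
    ℕ → Ω → Measure Ω
  | 0 => fun θ => Measure.dirac θ
  | (t + 1) => fun θ => (iterK P t θ).bind P

/-- Total variation distance: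
`‖μ − ν‖_TV = sup { ∫ f dμ − ∫ f dν : f measurable, 0 ≤ f ≤ 1 }`. -/
noncomputable def tvDist {Ω : Type*} [MeasurableSpace Ω] (μ ν : Measure Ω) : ℝ :=
  ⨆ f : {f : Ω → ℝ // Measurable f ∧ ∀ x, f x ∈ Set.Icc (0:ℝ) 1},
    (∫ x, f.1 x ∂μ - ∫ x, f.1 x ∂ν)

/-! A rejected move of `P_RS` leaves the chain where it is, and from `θ` the random scan kernel
rejects with probability at least `1 - Σ_k λ_k A_{θ^{(−k)}}(θ^k)`; hence
`P_RS^t(θ, {θ}) ≥ (1 - Σ_k λ_k A_{θ^{(−k)}}(θ^k))^t`. As `λ{θ} = 0`, the target gives `{θ}` no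
mass, so the indicator of `{θ}` already witnesses the lower bound on the total variation
distance. -/

open scoped ENNReal

section TotalVariation

variable {Ω : Type*} [MeasurableSpace Ω]

lemma bddAbove_range_integral_sub (μ ν : Measure Ω) [IsFiniteMeasure μ] :
    BddAbove (Set.range fun f : {f : Ω → ℝ // Measurable f ∧ ∀ x, f x ∈ Set.Icc (0:ℝ) 1} =>
      ∫ x, f.1 x ∂μ - ∫ x, f.1 x ∂ν) := by
  refine ⟨μ.real Set.univ, ?_⟩
  rintro _ ⟨⟨f, -, hf⟩, rfl⟩
  have hμ : ∫ x, f x ∂μ ≤ μ.real Set.univ := by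
    simpa using integral_mono_of_nonneg (ae_of_all _ fun x => (hf x).1) (integrable_const 1)
      (ae_of_all _ fun x => (hf x).2)
  have hν : 0 ≤ ∫ x, f x ∂ν := integral_nonneg fun x => (hf x).1
  linarith

lemma measureReal_sub_le_tvDist (μ ν : Measure Ω) [IsFiniteMeasure μ] {s : Set Ω}
    (hs : MeasurableSet s) : μ.real s - ν.real s ≤ tvDist μ ν := by
  have hs01 : ∀ x, s.indicator 1 x ∈ Set.Icc (0:ℝ) 1 := fun x => by
    by_cases hx : x ∈ s <;> simp [hx]
  have h := le_ciSup (bddAbove_range_integral_sub μ ν)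
    ⟨s.indicator 1, measurable_one.indicator hs, hs01⟩
  rwa [integral_indicator_one hs, integral_indicator_one hs] at h

end TotalVariation

section Iterate

variable {Ω : Type*} [MeasurableSpace Ω] {P : Ω → Measure Ω}

lemma isProbabilityMeasure_iterK (hP : Measurable P) (hP1 : ∀ x, IsProbabilityMeasure (P x))
    (θ : Ω) : ∀ t, IsProbabilityMeasure (iterK P t θ)
  | 0 => by rw [iterK]; infer_instance
  | t + 1 =>
    have := isProbabilityMeasure_iterK hP hP1 θ t
    isProbabilityMeasure_bind hP.aemeasurable (ae_of_all _ hP1)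

lemma pow_le_iterK_singleton (hP : Measurable P) {θ : Ω} (hθ : MeasurableSet {θ}) {c : ℝ≥0∞}
    (hc : c ≤ P θ {θ}) : ∀ t, c ^ t ≤ iterK P t θ {θ}
  | 0 => by simp [iterK]
  | t + 1 => calc
      c ^ (t + 1) ≤ P θ {θ} * iterK P t θ {θ} := by
        rw [pow_succ']
        gcongr
        exact pow_le_iterK_singleton hP hθ hc t
      _ = ∫⁻ x in {θ}, P x {θ} ∂iterK P t θ :=
        (lintegral_singleton' (Measure.measurable_coe hθ |>.comp hP) θ).symm
      _ ≤ ∫⁻ x, P x {θ} ∂iterK P t θ := setLIntegral_le_lintegral _ _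
      _ = iterK P (t + 1) θ {θ} := (Measure.bind_apply hθ hP.aemeasurable).symm

end Iterate

section ComponentKernels

variable {M : ℕ} {Ωk : Fin M → Type*} [∀ k, MeasurableSpace (Ωk k)]
  {lamk : ∀ k, Measure (Ωk k)} {a q : (k : Fin M) → (∀ j, Ωk j) → Ωk k → ℝ}

structure IsAcceptRejectData (lamk : ∀ k, Measure (Ωk k))
    (a q : (k : Fin M) → (∀ j, Ωk j) → Ωk k → ℝ) : Prop where
  measurable_accept : ∀ k, Measurable (fun p : (∀ j, Ωk j) × Ωk k => a k p.1 p.2)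
  measurable_proposal : ∀ k, Measurable (fun p : (∀ j, Ωk j) × Ωk k => q k p.1 p.2)
  accept_mem_Icc : ∀ k θ x, a k θ x ∈ Set.Icc (0:ℝ) 1
  proposal_nonneg : ∀ k θ x, 0 ≤ q k θ x
  integral_proposal : ∀ k θ, ∫ x, q k θ x ∂(lamk k) = 1

namespace IsAcceptRejectData

variable (k : Fin M) (θ : ∀ j, Ωk j)

lemma integrable_proposal (h : IsAcceptRejectData lamk a q) :
    Integrable (q k θ) (lamk k) :=
  .of_integral_ne_zero (by rw [h.integral_proposal]; exact one_ne_zero)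

lemma integrable_accept_mul_proposal (h : IsAcceptRejectData lamk a q) :
    Integrable (fun x => a k θ x * q k θ x) (lamk k) := by
  refine (h.integrable_proposal k θ).bdd_mul (c := 1)
    ((h.measurable_accept k).comp measurable_prodMk_left).aestronglyMeasurable
    (ae_of_all _ fun x => ?_)
  rw [Real.norm_of_nonneg (h.accept_mem_Icc k θ x).1]
  exact (h.accept_mem_Icc k θ x).2

lemma compAcceptProb_nonneg (h : IsAcceptRejectData lamk a q) :
    0 ≤ compAcceptProb lamk a q k θ :=
  integral_nonneg fun x => mul_nonneg (h.accept_mem_Icc k θ x).1 (h.proposal_nonneg k θ x)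

lemma compAcceptProb_le_one (h : IsAcceptRejectData lamk a q) :
    compAcceptProb lamk a q k θ ≤ 1 := by
  rw [← h.integral_proposal k θ]
  exact integral_mono (h.integrable_accept_mul_proposal k θ) (h.integrable_proposal k θ)
    fun x => mul_le_of_le_one_left (h.proposal_nonneg k θ x) (h.accept_mem_Icc k θ x).2

lemma isProbabilityMeasure_compKernel (h : IsAcceptRejectData lamk a q) :
    IsProbabilityMeasure (compKernel lamk a q k θ) := by
  constructor
  have hA : ∫⁻ x, ENNReal.ofReal (a k θ x * q k θ x) ∂(lamk k)
      = ENNReal.ofReal (compAcceptProb lamk a q k θ) :=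
    (ofReal_integral_eq_lintegral_ofReal (h.integrable_accept_mul_proposal k θ) <|
      ae_of_all _ fun x => mul_nonneg (h.accept_mem_Icc k θ x).1 (h.proposal_nonneg k θ x)).symm
  rw [compKernel, Measure.add_apply, Measure.smul_apply, withDensity_apply _ .univ,
    Measure.restrict_univ, hA, measure_univ, smul_eq_mul, mul_one,
    ← ENNReal.ofReal_add (h.compAcceptProb_nonneg k θ)
      (sub_nonneg.2 (h.compAcceptProb_le_one k θ)), add_sub_cancel, ENNReal.ofReal_one]

lemma isProbabilityMeasure_rsKernel (h : IsAcceptRejectData lamk a q) {sel : Fin M → ℝ}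
    (hsel : ∀ k, 0 ≤ sel k) (hsum : ∑ k, sel k = 1) :
    IsProbabilityMeasure (rsKernel sel lamk a q θ) := by
  constructor
  have hk : ∀ k, (compKernel lamk a q k θ).map (fun x => Function.update θ k x) Set.univ = 1 :=
    fun k => by
      have := h.isProbabilityMeasure_compKernel k θ
      rw [Measure.map_apply (measurable_update θ) .univ, Set.preimage_univ, measure_univ]
  simp only [rsKernel, Measure.finsetSum_apply, Measure.smul_apply, hk, smul_eq_mul, mul_one]
  rw [← ENNReal.ofReal_sum_of_nonneg fun k _ => hsel k, hsum, ENNReal.ofReal_one]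

lemma sum_mul_compAcceptProb_le_one (h : IsAcceptRejectData lamk a q) {sel : Fin M → ℝ}
    (hsel : ∀ k, 0 ≤ sel k) (hsum : ∑ k, sel k = 1) :
    ∑ k, sel k * compAcceptProb lamk a q k θ ≤ 1 :=
  hsum ▸ Finset.sum_le_sum fun k _ =>
    mul_le_of_le_one_right (hsel k) (h.compAcceptProb_le_one k θ)

end IsAcceptRejectData

lemma measurable_compAcceptProb {k : Fin M} [SFinite (lamk k)]
    (hak : Measurable (fun p : (∀ j, Ωk j) × Ωk k => a k p.1 p.2))
    (hqk : Measurable (fun p : (∀ j, Ωk j) × Ωk k => q k p.1 p.2)) :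
    Measurable (compAcceptProb lamk a q k) :=
  (hak.mul hqk).stronglyMeasurable.integral_prod_right'.measurable

lemma map_update_compKernel_apply {k : Fin M} {θ : ∀ j, Ωk j} {s : Set (∀ j, Ωk j)}
    (hs : MeasurableSet s) :
    (compKernel lamk a q k θ).map (fun x => Function.update θ k x) s =
      ∫⁻ x, s.indicator 1 (Function.update θ k x) * ENNReal.ofReal (a k θ x * q k θ x) ∂(lamk k)
        + ENNReal.ofReal (1 - compAcceptProb lamk a q k θ) * s.indicator 1 θ := by
  have hB : MeasurableSet ((fun x => Function.update θ k x) ⁻¹' s) := measurable_update θ hs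
  rw [Measure.map_apply (measurable_update θ) hs, compKernel, Measure.add_apply,
    Measure.smul_apply, smul_eq_mul, withDensity_apply _ hB, Measure.dirac_apply' _ hB,
    ← lintegral_indicator hB]
  congr 1
  · congr 1
    funext x
    by_cases hx : Function.update θ k x ∈ s <;> simp [hx]
  · by_cases hθ : θ ∈ s <;> simp [hθ]

lemma measurable_rsKernel [∀ k, SFinite (lamk k)]
    (ham : ∀ k, Measurable (fun p : (∀ j, Ωk j) × Ωk k => a k p.1 p.2))
    (hqm : ∀ k, Measurable (fun p : (∀ j, Ωk j) × Ωk k => q k p.1 p.2)) (sel : Fin M → ℝ) :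
    Measurable (rsKernel sel lamk a q) := by
  refine Measure.measurable_of_measurable_coe _ fun s hs => ?_
  simp only [rsKernel, Measure.finsetSum_apply, Measure.smul_apply, smul_eq_mul,
    map_update_compKernel_apply hs]
  refine Finset.measurable_sum _ fun k _ => .const_mul (.add ?_ ?_) _
  · exact Measurable.lintegral_prod_right'
      (((measurable_one.indicator hs).comp measurable_update').mul
        (ENNReal.measurable_ofReal.comp ((ham k).mul (hqm k))))
  · exact (ENNReal.measurable_ofReal.comp
      (measurable_const.sub (measurable_compAcceptProb (ham k) (hqm k)))).mul
      (measurable_one.indicator hs)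

lemma ofReal_one_sub_sum_le_rsKernel_singleton {sel : Fin M → ℝ} (hsel : ∀ k, 0 ≤ sel k)
    (hsum : ∑ k, sel k = 1) {θ : ∀ j, Ωk j} (hA : ∀ k, compAcceptProb lamk a q k θ ≤ 1)
    (hθ : MeasurableSet {θ}) :
    ENNReal.ofReal (1 - ∑ k, sel k * compAcceptProb lamk a q k θ) ≤
      rsKernel sel lamk a q θ {θ} := by
  -- the rejection mass of the `k`-th kernel sits at `θ k`, and `Function.update θ k (θ k) = θ`
  have hstay : ∀ k, ENNReal.ofReal (1 - compAcceptProb lamk a q k θ) ≤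
      (compKernel lamk a q k θ).map (fun x => Function.update θ k x) {θ} := fun k => by
    rw [Measure.map_apply (measurable_update θ) hθ, compKernel, Measure.add_apply,
      Measure.smul_apply, Measure.dirac_apply_of_mem (by simp), smul_eq_mul, mul_one]
    exact le_add_self
  have hsplit : 1 - ∑ k, sel k * compAcceptProb lamk a q k θ =
      ∑ k, sel k * (1 - compAcceptProb lamk a q k θ) := by
    simp only [mul_sub, mul_one, Finset.sum_sub_distrib, hsum]
  calc ENNReal.ofReal (1 - ∑ k, sel k * compAcceptProb lamk a q k θ)
      = ∑ k, ENNReal.ofReal (sel k) * ENNReal.ofReal (1 - compAcceptProb lamk a q k θ) := by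
        rw [hsplit, ENNReal.ofReal_sum_of_nonneg fun k _ => mul_nonneg (hsel k)
          (sub_nonneg.2 (hA k))]
        simp_rw [ENNReal.ofReal_mul (hsel _)]
    _ ≤ ∑ k, ENNReal.ofReal (sel k) *
          (compKernel lamk a q k θ).map (fun x => Function.update θ k x) {θ} := by
        gcongr with k
        exact hstay k
    _ = rsKernel sel lamk a q θ {θ} := by
        simp only [rsKernel, Measure.finsetSum_apply, Measure.smul_apply, smul_eq_mul]

end ComponentKernels

theorem rs_arb_tv_lower_bound_general
    {M : ℕ} {Ωk : Fin M → Type*} [∀ k, MeasurableSpace (Ωk k)]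
    (lam : Measure (∀ j, Ωk j))
    (Pi : Measure (∀ j, Ωk j))
    (Θk : ∀ k, Set (Ωk k))
    (pi : (∀ j, Ωk j) → ℝ)
    (hdens : Pi = lam.withDensity (fun x => ENNReal.ofReal (pi x)))
    (hsing : ∀ θ ∈ Set.pi Set.univ Θk, MeasurableSet {θ} ∧ lam {θ} = 0)
    (lamk : ∀ k, Measure (Ωk k)) [∀ k, SigmaFinite (lamk k)]
    (a q : (k : Fin M) → (∀ j, Ωk j) → Ωk k → ℝ)
    (ham : ∀ k, Measurable (fun p : (∀ j, Ωk j) × Ωk k => a k p.1 p.2))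
    (hqm : ∀ k, Measurable (fun p : (∀ j, Ωk j) × Ωk k => q k p.1 p.2))
    (ha01 : ∀ k θ x, a k θ x ∈ Set.Icc (0:ℝ) 1)
    (hq0 : ∀ k θ x, 0 ≤ q k θ x) (hq1 : ∀ k θ, ∫ x, q k θ x ∂(lamk k) = 1)
    (sel : Fin M → ℝ) (hsel : ∀ k, sel k ∈ Set.Ioo (0:ℝ) 1) (hsum : ∑ k, sel k = 1)
    (t : ℕ) (θ : ∀ j, Ωk j) (hθ : θ ∈ Set.pi Set.univ Θk) :
    (1 - ∑ k, sel k * compAcceptProb lamk a q k θ) ^ t ≤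
      tvDist (iterK (rsKernel sel lamk a q) t θ) Pi := by
  have hARB : IsAcceptRejectData lamk a q := ⟨ham, hqm, ha01, hq0, hq1⟩
  have hsel0 : ∀ k, 0 ≤ sel k := fun k => (hsel k).1.le
  obtain ⟨hθs, hlamθ⟩ := hsing θ hθ
  set P := rsKernel sel lamk a q
  have hP : Measurable P := measurable_rsKernel ham hqm sel
  have := isProbabilityMeasure_iterK hP (hARB.isProbabilityMeasure_rsKernel · hsel0 hsum) θ t
  have hPiθ : Pi.real {θ} = 0 := by
    rw [Measure.real, hdens, withDensity_absolutelyContinuous lam _ hlamθ, ENNReal.toReal_zero]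
  have hstay : ENNReal.ofReal (1 - ∑ k, sel k * compAcceptProb lamk a q k θ) ^ t ≤
      iterK P t θ {θ} :=
    pow_le_iterK_singleton hP hθs (ofReal_one_sub_sum_le_rsKernel_singleton hsel0 hsum
      (hARB.compAcceptProb_le_one · θ) hθs) t
  calc (1 - ∑ k, sel k * compAcceptProb lamk a q k θ) ^ t
      ≤ (iterK P t θ).real {θ} - Pi.real {θ} := by
        rw [hPiθ, sub_zero, Measure.real, ← ENNReal.ofReal_le_iff_le_toReal (measure_ne_top _ _),
          ENNReal.ofReal_pow (sub_nonneg.2 (hARB.sum_mul_compAcceptProb_le_one θ hsel0 hsum))]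
        exact hstay
    _ ≤ tvDist (iterK P t θ) Pi := measureReal_sub_le_tvDist _ _ hθs

/-- Theorem 6: for the random scan componentwise ARB Markov kernel, for any `t ∈ ℤ₊` and
any `θ ∈ Θ`, `‖P_RS^t(θ,·) − Π‖_TV ≥ (1 − Σ_k λ_k A_{θ^{(−k)}}(θ^k))^t`. -/
theorem rs_arb_tv_lower_bound
    {M : ℕ} (hM : 0 < M) {Ωk : Fin M → Type*} [∀ k, MeasurableSpace (Ωk k)]
    (lam : Measure (∀ j, Ωk j)) [SigmaFinite lam]
    (Pi : Measure (∀ j, Ωk j)) [IsProbabilityMeasure Pi]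
    (Θk : ∀ k, Set (Ωk k)) (hne : ∀ k, (Θk k).Nonempty)
    (hmeasΘ : ∀ k, MeasurableSet (Θk k))
    (pi : (∀ j, Ωk j) → ℝ) (hpim : Measurable pi)
    (hdens : Pi = lam.withDensity (fun x => ENNReal.ofReal (pi x)))
    (hpos : ∀ θ ∈ Set.pi Set.univ Θk, 0 < pi θ)
    (hzero : ∀ θ ∉ Set.pi Set.univ Θk, pi θ = 0)
    (hsing : ∀ θ ∈ Set.pi Set.univ Θk, MeasurableSet {θ} ∧ lam {θ} = 0)
    (lamk : ∀ k, Measure (Ωk k)) [∀ k, SigmaFinite (lamk k)]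
    (a q : (k : Fin M) → (∀ j, Ωk j) → Ωk k → ℝ)
    (ham : ∀ k, Measurable (fun p : (∀ j, Ωk j) × Ωk k => a k p.1 p.2))
    (hqm : ∀ k, Measurable (fun p : (∀ j, Ωk j) × Ωk k => q k p.1 p.2))
    (ha01 : ∀ k θ x, a k θ x ∈ Set.Icc (0:ℝ) 1)
    (hq0 : ∀ k θ x, 0 ≤ q k θ x) (hq1 : ∀ k θ, ∫ x, q k θ x ∂(lamk k) = 1)
    (sel : Fin M → ℝ) (hsel : ∀ k, sel k ∈ Set.Ioo (0:ℝ) 1) (hsum : ∑ k, sel k = 1)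
    (hinv : Pi.bind (rsKernel sel lamk a q) = Pi)
    (t : ℕ) (ht : 1 ≤ t) (θ : ∀ j, Ωk j) (hθ : θ ∈ Set.pi Set.univ Θk) :
    (1 - ∑ k, sel k * compAcceptProb lamk a q k θ) ^ t ≤
      tvDist (iterK (rsKernel sel lamk a q) t θ) Pi :=
  rs_arb_tv_lower_bound_general lam Pi Θk pi hdens hsing lamk a q ham hqm ha01 hq0 hq1 sel hsel hsum
    t θ hθ
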